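/- In a tree G with k leaves, any inclusion-minimal (or any optimal, assuming strictly positive link costs) tree augmentation solution S contains at most 2 links connecting nodes of Q_i to nodes of Q_j for each pair of paths Q_i, Q_j obtained by splitting G at its vertices of degree ≥ 3; in particular S contains O(k²) such 'inter-path' links. -/

import Mathlib

open SimpleGraph
open scoped Classical

/-- The unique path between two vertices of a tree, as a walk. -/
noncomputable def tpath {V : Type*} (G : SimpleGraph V) (hG : G.IsTree) (u v : V) : G.Walk u v :=
  (hG.existsUnique_path u v).choose

/-- The path from `a` to `b` is one of the pieces obtained by splitting the tree at its
vertices of degree at least `3`: all of its interior vertices have degree `2`. -/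
noncomputable def IsPiece {V : Type*} [Fintype V] [DecidableEq V] (G : SimpleGraph V)
    [DecidableRel G.Adj] (hG : G.IsTree) (a b : V) : Prop :=
  ∀ x ∈ (tpath G hG a b).support, x ≠ a → x ≠ b → G.degree x = 2

/-!
A minimal solution gives every link a private edge, covered by no other link. For a link between
edge-disjoint paths `P` and `Q` of a tree, an edge it covers and another such link misses lies on
`P` or on `Q`; so among three links, two have their private edges on the same path, say `P`.
Seen from an edge of `P`, all of `Q` sits at the gate `p` of `Q` in `P`, so such a link `u v`
covers an edge of `P` exactly when the path from `p` to `u` does. If `Q` has an edge, `p` has an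
edge off `P`; as interior vertices of `P` have degree `2`, `p` is then an end of `P`, the paths
from `p` to the `u`'s are nested, and no two of them can have private edges. If `Q` is a single
vertex, these paths leave `p` in one of two directions along `P`, and two of three are nested.
-/

theorem exists_private_of_minimal_cover {α β : Type*} [DecidableEq α] {S : Finset α}
    {U : Set β} {covers : α → β → Prop} (hcov : ∀ x ∈ U, ∃ ℓ ∈ S, covers ℓ x)
    (hmin : ∀ ℓ ∈ S, ¬ ∀ x ∈ U, ∃ ℓ' ∈ S.erase ℓ, covers ℓ' x) {ℓ : α} (hℓ : ℓ ∈ S) :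
    ∃ x, covers ℓ x ∧ ∀ ℓ' ∈ S, ℓ' ≠ ℓ → ¬ covers ℓ' x := by
  push Not at hmin
  obtain ⟨x, hxU, hx⟩ := hmin ℓ hℓ
  obtain ⟨ℓ', hℓ'S, hℓ'x⟩ := hcov x hxU
  obtain rfl : ℓ' = ℓ := by_contra fun h => hx ℓ' (Finset.mem_erase.2 ⟨h, hℓ'S⟩) hℓ'x
  exact ⟨x, hℓ'x, fun m hm hne => hx m (Finset.mem_erase.2 ⟨hne, hm⟩)⟩

section TreePath

variable {V : Type*} {G : SimpleGraph V} (hG : G.IsTree)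

theorem tpath_isPath (u v : V) : (tpath G hG u v).IsPath :=
  (hG.existsUnique_path u v).choose_spec.1

theorem tpath_eq_of_isPath {u v : V} {p : G.Walk u v} (hp : p.IsPath) : tpath G hG u v = p :=
  ((hG.existsUnique_path u v).choose_spec.2 p hp).symm

theorem tpath_self (u : V) : tpath G hG u u = .nil :=
  tpath_eq_of_isPath hG .nil

theorem edges_tpath_subset_edges {u v : V} (p : G.Walk u v) :
    (tpath G hG u v).edges ⊆ p.edges := by
  classical
  rw [tpath_eq_of_isPath hG p.bypass_isPath]
  exact p.edges_bypass_subset_edges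

theorem mem_edges_tpath_comm {u v : V} {e : Sym2 V} :
    e ∈ (tpath G hG u v).edges ↔ e ∈ (tpath G hG v u).edges := by
  rw [tpath_eq_of_isPath hG (tpath_isPath hG u v).reverse, Walk.edges_reverse, List.mem_reverse]

theorem mem_edges_tpath_or {u w : V} (v : V) {e : Sym2 V} (he : e ∈ (tpath G hG u w).edges) :
    e ∈ (tpath G hG u v).edges ∨ e ∈ (tpath G hG v w).edges := by
  simpa using edges_tpath_subset_edges hG ((tpath G hG u v).append (tpath G hG v w)) he

theorem mem_edges_tpath_congr_right {u v w : V} {e : Sym2 V}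
    (h : e ∉ (tpath G hG v w).edges) :
    e ∈ (tpath G hG u v).edges ↔ e ∈ (tpath G hG u w).edges :=
  ⟨fun he => (mem_edges_tpath_or hG w he).resolve_right (mt (mem_edges_tpath_comm hG).1 h),
    fun he => (mem_edges_tpath_or hG v he).resolve_right h⟩

theorem mem_edges_tpath_or_of_not_mem {u v u' v' : V} {e : Sym2 V}
    (he : e ∈ (tpath G hG u v).edges) (he' : e ∉ (tpath G hG u' v').edges) :
    e ∈ (tpath G hG u u').edges ∨ e ∈ (tpath G hG v' v).edges :=
  (mem_edges_tpath_or hG u' he).imp_right fun h => (mem_edges_tpath_or hG v' h).resolve_left he'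

theorem edges_tpath_subset_of_mem_support {a b u v : V} (p : G.Walk a b) (hu : u ∈ p.support)
    (hv : v ∈ p.support) : (tpath G hG u v).edges ⊆ p.edges := by
  classical
  intro e he
  have := edges_tpath_subset_edges hG ((p.takeUntil u hu).reverse.append (p.takeUntil v hv)) he
  rw [Walk.edges_append, Walk.edges_reverse, List.mem_append, List.mem_reverse] at this
  exact this.elim (p.edges_takeUntil_subset_edges hu ·) (p.edges_takeUntil_subset_edges hv ·)

/-- Paths issuing from the start of a path `p` towards vertices of `p` are prefixes of `p`. -/
theorem edges_tpath_subset_or_subset {a b u u' : V} {p : G.Walk a b} (hp : p.IsPath)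
    (hu : u ∈ p.support) (hu' : u' ∈ p.support) :
    (tpath G hG a u).edges ⊆ (tpath G hG a u').edges ∨
      (tpath G hG a u').edges ⊆ (tpath G hG a u).edges := by
  classical
  rw [tpath_eq_of_isPath hG (hp.takeUntil hu), tpath_eq_of_isPath hG (hp.takeUntil hu')]
  exact (List.prefix_or_prefix_of_prefix (p.edges_takeUntil_prefix_edges hu)
    (p.edges_takeUntil_prefix_edges hu')).imp List.IsPrefix.subset List.IsPrefix.subset

theorem mem_support_tpath_or {a b x u : V} (hx : x ∈ (tpath G hG a b).support)
    (hu : u ∈ (tpath G hG a b).support) :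
    u ∈ (tpath G hG x a).support ∨ u ∈ (tpath G hG x b).support := by
  classical
  have hP := tpath_isPath hG a b
  rw [← (tpath G hG a b).take_spec hx, Walk.mem_support_append_iff] at hu
  rwa [tpath_eq_of_isPath hG (hP.takeUntil hx).reverse, tpath_eq_of_isPath hG (hP.dropUntil hx),
    Walk.support_reverse, List.mem_reverse]

/-- The gate of `z` in `p`: the vertex of `p` closest to `z`. -/
theorem exists_mem_support_disjoint_edges_tpath {a b : V} (z : V) (p : G.Walk a b) :
    ∃ x ∈ p.support, (tpath G hG z x).edges.Disjoint p.edges := by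
  classical
  obtain ⟨x, hx, hmin⟩ := p.support.toFinset.exists_min_image (fun x => (tpath G hG z x).length)
    ⟨a, by simp⟩
  rw [List.mem_toFinset] at hx
  refine ⟨x, hx, fun e he hep => ?_⟩
  have hshorter : ∀ w ∈ e, w ≠ x → False := fun w hw hwx => by
    have hwz := Walk.mem_support_of_mem_edges he hw
    have hlt := Walk.length_takeUntil_lt_length hwz hwx
    rw [← tpath_eq_of_isPath hG ((tpath_isPath hG z x).takeUntil hwz)] at hlt
    exact hlt.not_ge (hmin w (List.mem_toFinset.2 (Walk.mem_support_of_mem_edges hep hw)))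
  induction e using Sym2.ind with
  | _ y y' =>
    have hyy' : y ≠ y' := G.ne_of_adj (p.edges_subset_edgeSet hep)
    by_cases hyx : y = x
    · exact hshorter y' (Sym2.mem_mk_right y y') (hyx ▸ hyy'.symm)
    · exact hshorter y (Sym2.mem_mk_left y y') hyx

theorem false_of_three_private_links_to_vertex {a b c : V} {u : Fin 3 → V} {e : Fin 3 → Sym2 V}
    (hu : ∀ i, u i ∈ (tpath G hG a b).support) (he : ∀ i, e i ∈ (tpath G hG (u i) c).edges)
    (hpriv : ∀ i j, i ≠ j → e i ∉ (tpath G hG (u j) c).edges) : False := by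
  obtain ⟨q, hq, hgate⟩ := exists_mem_support_disjoint_edges_tpath hG c (tpath G hG a b)
  have hside : ∀ i j, i ≠ j → ∀ x,
      e i ∈ (tpath G hG x c).edges ↔ e i ∈ (tpath G hG q x).edges := fun i j hij x => by
    have heP := edges_tpath_subset_of_mem_support hG _ (hu i) (hu j)
      ((mem_edges_tpath_or hG (u j) (he i)).resolve_right (hpriv i j hij))
    exact (mem_edges_tpath_congr_right hG fun h => hgate h heP).trans
      (mem_edges_tpath_comm hG)
  -- `q` cuts the path from `a` to `b` in two, and two of the `u i` lie on the same half
  obtain ⟨i, j, hij, hsame⟩ := Fintype.exists_ne_map_eq_of_card_lt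
    (fun i => u i ∈ (tpath G hG q a).support) (by simp [Fintype.card_prop])
  obtain ⟨d, hui, huj⟩ : ∃ d, u i ∈ (tpath G hG q d).support ∧ u j ∈ (tpath G hG q d).support := by
    by_cases h : u i ∈ (tpath G hG q a).support
    · exact ⟨a, h, hsame ▸ h⟩
    · exact ⟨b, (mem_support_tpath_or hG hq (hu i)).resolve_left h,
        (mem_support_tpath_or hG hq (hu j)).resolve_left (hsame ▸ h)⟩
  rcases edges_tpath_subset_or_subset hG (tpath_isPath hG q d) hui huj with h | h
  · exact hpriv i j hij ((hside i j hij _).2 (h ((hside i j hij _).1 (he i))))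
  · exact hpriv j i hij.symm ((hside j i hij.symm _).2 (h ((hside j i hij.symm _).1 (he j))))

end TreePath

section Pieces

variable {V : Type*} [Fintype V] [DecidableEq V] {G : SimpleGraph V} [DecidableRel G.Adj]
  (hG : G.IsTree)

theorem IsPiece.mem_edges_of_adj {a b x y : V} (h : IsPiece G hG a b)
    (hx : x ∈ (tpath G hG a b).support) (hxa : x ≠ a) (hxb : x ≠ b) (hxy : G.Adj x y) :
    s(x, y) ∈ (tpath G hG a b).edges := by
  have hP := tpath_isPath hG a b
  obtain ⟨ya, hya⟩ : ∃ ya, s(x, ya) ∈ (tpath G hG x a).edges :=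
    ⟨_, Walk.mk_start_snd_mem_edges (Walk.not_nil_of_ne hxa)⟩
  obtain ⟨yb, hyb⟩ : ∃ yb, s(x, yb) ∈ (tpath G hG x b).edges :=
    ⟨_, Walk.mk_start_snd_mem_edges (Walk.not_nil_of_ne hxb)⟩
  have hne : ya ≠ yb := by
    rintro rfl
    rw [← mem_edges_tpath_comm, tpath_eq_of_isPath hG (hP.takeUntil hx)] at hya
    rw [tpath_eq_of_isPath hG (hP.dropUntil hx)] at hyb
    have hnd := hP.isTrail.edges_nodup
    rw [← (tpath G hG a b).take_spec hx, Walk.edges_append] at hnd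
    exact List.disjoint_of_nodup_append hnd hya hyb
  have hnbr : G.neighborFinset x = {ya, yb} := by
    refine (Finset.eq_of_subset_of_card_le (fun z hz => ?_) ?_).symm
    · rw [mem_neighborFinset, ← mem_edgeSet]
      rcases Finset.mem_insert.1 hz with rfl | hz
      · exact Walk.edges_subset_edgeSet _ hya
      · exact Finset.mem_singleton.1 hz ▸ Walk.edges_subset_edgeSet _ hyb
    · rw [card_neighborFinset_eq_degree, h x hx hxa hxb, Finset.card_pair hne]
  have hy : y ∈ G.neighborFinset x := (mem_neighborFinset G x y).2 hxy
  rw [hnbr, Finset.mem_insert, Finset.mem_singleton] at hy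
  rcases hy with rfl | rfl
  · exact edges_tpath_subset_of_mem_support hG _ hx (Walk.start_mem_support _) hya
  · exact edges_tpath_subset_of_mem_support hG _ hx (Walk.end_mem_support _) hyb

theorem IsPiece.false_of_private_edges {a b a' b' u u' v v' : V} {e e' : Sym2 V}
    (hP : IsPiece G hG a b) (hQ : a' ≠ b')
    (hdisj : ∀ f ∈ (tpath G hG a b).edges, f ∉ (tpath G hG a' b').edges)
    (hu : u ∈ (tpath G hG a b).support) (hu' : u' ∈ (tpath G hG a b).support)
    (hv : v ∈ (tpath G hG a' b').support) (hv' : v' ∈ (tpath G hG a' b').support)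
    (he : e ∈ (tpath G hG a b).edges) (he' : e' ∈ (tpath G hG a b).edges)
    (heuv : e ∈ (tpath G hG u v).edges) (heu'v' : e ∉ (tpath G hG u' v').edges)
    (he'u'v' : e' ∈ (tpath G hG u' v').edges) (he'uv : e' ∉ (tpath G hG u v).edges) :
    False := by
  obtain ⟨p, hp, hgate⟩ := exists_mem_support_disjoint_edges_tpath hG a' (tpath G hG a b)
  have hside : ∀ f ∈ (tpath G hG a b).edges, ∀ x, ∀ w ∈ (tpath G hG a' b').support,
      f ∈ (tpath G hG x w).edges ↔ f ∈ (tpath G hG p x).edges := fun f hf x w hw => by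
    refine (mem_edges_tpath_congr_right hG fun hfw => ?_).trans (mem_edges_tpath_comm hG)
    rcases mem_edges_tpath_or hG a' hfw with h | h
    · exact hdisj f hf
        (edges_tpath_subset_of_mem_support hG _ hw (Walk.start_mem_support _) h)
    · exact hgate h hf
  rw [hside e he u v hv] at heuv
  rw [hside e he u' v' hv'] at heu'v'
  rw [hside e' he' u' v' hv'] at he'u'v'
  rw [hside e' he' u v hv] at he'uv
  have hpab : p = a ∨ p = b := by
    by_contra! hpab
    obtain ⟨y, hpy, hy⟩ : ∃ y, G.Adj p y ∧ s(p, y) ∉ (tpath G hG a b).edges := by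
      rcases eq_or_ne p a' with rfl | hpa'
      · exact ⟨_, Walk.adj_snd (Walk.not_nil_of_ne hQ),
          fun h => hdisj _ h (Walk.mk_start_snd_mem_edges (Walk.not_nil_of_ne hQ))⟩
      · exact ⟨_, Walk.adj_snd (Walk.not_nil_of_ne hpa'),
          hgate ((mem_edges_tpath_comm hG).1
            (Walk.mk_start_snd_mem_edges (Walk.not_nil_of_ne hpa')))⟩
    exact hy (hP.mem_edges_of_adj hG hp hpab.1 hpab.2 hpy)
  obtain ⟨c, W, hW, huW, hu'W⟩ :
      ∃ c, ∃ W : G.Walk p c, W.IsPath ∧ u ∈ W.support ∧ u' ∈ W.support := by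
    rcases hpab with rfl | rfl
    · exact ⟨b, _, tpath_isPath hG p b, hu, hu'⟩
    · exact ⟨a, _, (tpath_isPath hG a p).reverse, by simpa using hu, by simpa using hu'⟩
  rcases edges_tpath_subset_or_subset hG hW huW hu'W with h | h
  exacts [heu'v' (h heuv), he'uv (h he'u'v')]

theorem false_of_three_private_links {a₁ b₁ a₂ b₂ : V}
    (h₁ : IsPiece G hG a₁ b₁) (h₂ : IsPiece G hG a₂ b₂)
    (hdisj : ∀ f ∈ (tpath G hG a₁ b₁).edges, f ∉ (tpath G hG a₂ b₂).edges)
    {u v : Fin 3 → V} {e : Fin 3 → Sym2 V}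
    (hu : ∀ i, u i ∈ (tpath G hG a₁ b₁).support) (hv : ∀ i, v i ∈ (tpath G hG a₂ b₂).support)
    (he : ∀ i, e i ∈ (tpath G hG (u i) (v i)).edges)
    (hpriv : ∀ i j, i ≠ j → e i ∉ (tpath G hG (u j) (v j)).edges) : False := by
  rcases eq_or_ne a₂ b₂ with rfl | hQ
  · obtain rfl : v = fun _ => a₂ := funext fun i => by simpa [tpath_self] using hv i
    exact false_of_three_private_links_to_vertex hG hu he hpriv
  rcases eq_or_ne a₁ b₁ with rfl | hP
  · obtain rfl : u = fun _ => a₁ := funext fun i => by simpa [tpath_self] using hu i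
    exact false_of_three_private_links_to_vertex hG hv
      (fun i => (mem_edges_tpath_comm hG).1 (he i))
      fun i j hij h => hpriv i j hij ((mem_edges_tpath_comm hG).1 h)
  obtain ⟨i, j, hij, hsame⟩ := Fintype.exists_ne_map_eq_of_card_lt
    (fun i => e i ∈ (tpath G hG a₁ b₁).edges) (by simp [Fintype.card_prop])
  have hloc : ∀ {i j}, i ≠ j →
      e i ∈ (tpath G hG a₁ b₁).edges ∨ e i ∈ (tpath G hG a₂ b₂).edges := fun {i j} hij =>
    (mem_edges_tpath_or_of_not_mem hG (he i) (hpriv i j hij)).imp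
      (edges_tpath_subset_of_mem_support hG _ (hu i) (hu j) ·)
      (edges_tpath_subset_of_mem_support hG _ (hv j) (hv i) ·)
  by_cases hi : e i ∈ (tpath G hG a₁ b₁).edges
  · exact h₁.false_of_private_edges hG hQ hdisj (hu i) (hu j) (hv i) (hv j) hi (hsame ▸ hi)
      (he i) (hpriv i j hij) (he j) (hpriv j i hij.symm)
  · exact h₂.false_of_private_edges hG hP (fun f hf₂ hf₁ => hdisj f hf₁ hf₂) (hv i) (hv j) (hu i)
      (hu j) ((hloc hij).resolve_left hi) ((hloc hij.symm).resolve_left (hsame ▸ hi))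
      ((mem_edges_tpath_comm hG).1 (he i)) (mt (mem_edges_tpath_comm hG).2 (hpriv i j hij))
      ((mem_edges_tpath_comm hG).1 (he j)) (mt (mem_edges_tpath_comm hG).2 (hpriv j i hij.symm))

end Pieces

theorem minimal_solution_interpath_links_general {V : Type*} [Fintype V] [DecidableEq V]
    (G : SimpleGraph V) [DecidableRel G.Adj] (hG : G.IsTree)
    (S : Finset (V × V))
    (hfeas : ∀ e ∈ G.edgeSet, ∃ ℓ ∈ S, e ∈ (tpath G hG ℓ.1 ℓ.2).edges)
    (hmin : ∀ ℓ ∈ S, ¬ ∀ e ∈ G.edgeSet, ∃ ℓ' ∈ S.erase ℓ, e ∈ (tpath G hG ℓ'.1 ℓ'.2).edges)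
    (a₁ b₁ a₂ b₂ : V) (h₁ : IsPiece G hG a₁ b₁) (h₂ : IsPiece G hG a₂ b₂)
    (hdisj : ∀ e ∈ (tpath G hG a₁ b₁).edges, e ∉ (tpath G hG a₂ b₂).edges) :
    (S.filter (fun ℓ =>
      (ℓ.1 ∈ (tpath G hG a₁ b₁).support ∧ ℓ.2 ∈ (tpath G hG a₂ b₂).support) ∨
      (ℓ.2 ∈ (tpath G hG a₁ b₁).support ∧ ℓ.1 ∈ (tpath G hG a₂ b₂).support))).card ≤ 2 := by
  by_contra! hcard
  obtain ⟨ℓ⟩ : Nonempty (Fin 3 ↪ S.filter _) :=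
    Function.Embedding.nonempty_of_card_le (by simpa using hcard.nat_succ_le)
  have hS : ∀ i, (ℓ i : V × V) ∈ S := fun i => (Finset.mem_filter.1 (ℓ i).2).1
  have horient : ∀ i, ∃ u ∈ (tpath G hG a₁ b₁).support, ∃ v ∈ (tpath G hG a₂ b₂).support,
      ∀ f, f ∈ (tpath G hG (ℓ i).1.1 (ℓ i).1.2).edges ↔ f ∈ (tpath G hG u v).edges := fun i => by
    rcases (Finset.mem_filter.1 (ℓ i).2).2 with ⟨h₁, h₂⟩ | ⟨h₁, h₂⟩
    · exact ⟨_, h₁, _, h₂, fun f => Iff.rfl⟩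
    · exact ⟨_, h₁, _, h₂, fun f => mem_edges_tpath_comm hG⟩
  choose u hu v hv hlink using horient
  choose e he hpriv using fun i => exists_private_of_minimal_cover hfeas hmin (hS i)
  exact false_of_three_private_links hG h₁ h₂ hdisj hu hv (fun i => (hlink i _).1 (he i))
    fun i j hij h => hpriv i _ (hS j) (fun h' => hij (ℓ.injective (Subtype.ext h')).symm)
      ((hlink j _).2 h)

/-- In a tree `G`, any inclusion-minimal augmentation solution `S`
contains at most `2` links connecting nodes of one path piece `Q_i` (obtained by
splitting `G` at its vertices of degree at least `3`) to nodes of another,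
edge-disjoint, path piece `Q_j`. -/
theorem minimal_solution_interpath_links {V : Type*} [Fintype V] [DecidableEq V]
    (G : SimpleGraph V) [DecidableRel G.Adj] (hG : G.IsTree)
    (L : Finset (V × V)) (S : Finset (V × V)) (hSL : S ⊆ L)
    (hfeas : ∀ e ∈ G.edgeSet, ∃ ℓ ∈ S, e ∈ (tpath G hG ℓ.1 ℓ.2).edges)
    (hmin : ∀ ℓ ∈ S, ¬ ∀ e ∈ G.edgeSet, ∃ ℓ' ∈ S.erase ℓ, e ∈ (tpath G hG ℓ'.1 ℓ'.2).edges)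
    (a₁ b₁ a₂ b₂ : V) (h₁ : IsPiece G hG a₁ b₁) (h₂ : IsPiece G hG a₂ b₂)
    (hdisj : ∀ e ∈ (tpath G hG a₁ b₁).edges, e ∉ (tpath G hG a₂ b₂).edges) :
    (S.filter (fun ℓ =>
      (ℓ.1 ∈ (tpath G hG a₁ b₁).support ∧ ℓ.2 ∈ (tpath G hG a₂ b₂).support) ∨
      (ℓ.2 ∈ (tpath G hG a₁ b₁).support ∧ ℓ.1 ∈ (tpath G hG a₂ b₂).support))).card ≤ 2 :=
  minimal_solution_interpath_links_general G hG S hfeas hmin a₁ b₁ a₂ b₂ h₁ h₂ hdisj
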